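/- arXiv:1706.07703 — 2 statements merged into one kernel-verified Lean document; each statement's English description precedes it below -/
import Mathlib

section
/- Let a > −1 be real and M ∈ ℂ with Re M ≥ 1/2 and M ≠ 1/2. Then there exists a constant C > 0, depending only on a and M, such that for all reals t > b > 0: | ∫₀^{e^{−b} − e^{−t}} r^a ((e^{−t} + e^{−b})² − r²)^{−3/2 + M} dr | ≤ C (1 + (t−b)^κ) (e^t − e^b)^{a+1} (e^b + e^t)^{2 Re M − 3} e^{−(a + 2 Re M − 2)(b+t)}, where κ = 1 if Re M = 1/2 and κ = 0 otherwise. -/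
/-!
With `R = e^{-b} - e^{-t}` and `S = e^{-b} + e^{-t}` the right-hand side is
`C (1 + κ) R^{a+1} S^{2p}` and the modulus of the integrand is `r^a (S² - r²)^p`, where
`p = Re M - 3/2 ≥ -1`. For `p ≥ 0` one bounds `(S² - r²)^p ≤ S^{2p}`. For `p < 0`,
`(S² - r²)^p ≤ S^p (S - r)^p`, and `r^a (S - r)^p` is at most `2 S^p r^a` when `2r ≤ S` and a
constant times `R^a (S - r)^p` otherwise (then `r > R/2`). Finally `∫₀^R (S - r)^p dr` is
`O(R S^p / (p + 1))` for `p > -1`, while for `p = -1` it is `log (S / (S - R)) ≤ t - b`: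
this logarithm is the source of the factor `t - b` when `Re M = 1/2`.
-/

open MeasureTheory Real Set

section PowerIntegrals

variable {a p r R S : ℝ}

lemma integral_Ioo_rpow (ha : -1 < a) (hR : 0 ≤ R) :
    ∫ r in Ioo 0 R, r ^ a = R ^ (a + 1) / (a + 1) := by
  rw [← integral_Ioc_eq_integral_Ioo, ← intervalIntegral.integral_of_le hR,
    integral_rpow (Or.inl ha), zero_rpow (by linarith), sub_zero]

lemma integrableOn_Ioo_sub_rpow (p : ℝ) (hRS : R < S) :
    IntegrableOn (fun r : ℝ => (S - r) ^ p) (Ioo 0 R) :=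
  (ContinuousOn.integrableOn_Icc ((continuousOn_const.sub continuousOn_id).rpow_const
    fun r hr => Or.inl (show (0 : ℝ) < S - r by linarith [hr.2]).ne')).mono_set
    Ioo_subset_Icc_self

lemma integral_Ioo_sub_rpow (hR : 0 ≤ R) (S p : ℝ) :
    ∫ r in Ioo 0 R, (S - r) ^ p = ∫ u in (S - R)..S, u ^ p := by
  rw [← integral_Ioc_eq_integral_Ioo, ← intervalIntegral.integral_of_le hR]
  simpa using intervalIntegral.integral_comp_sub_left (a := 0) (b := R) (fun u : ℝ => u ^ p) S

lemma rpow_div_two_le {x : ℝ} (hx : 0 ≤ x) (hp : -1 ≤ p) : (x / 2) ^ p ≤ 2 * x ^ p := by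
  have h2 : (2 : ℝ)⁻¹ ≤ 2 ^ p := by
    simpa [rpow_neg_one] using rpow_le_rpow_of_exponent_le one_le_two hp
  rw [div_rpow hx zero_le_two, div_le_iff₀ (rpow_pos_of_pos two_pos p)]
  nlinarith [rpow_nonneg hx p]

lemma rpow_le_max_mul_rpow (hR : 0 < R) (hr : R / 2 ≤ r) (hrR : r ≤ R) (a : ℝ) :
    r ^ a ≤ max 1 (2 ^ (-a)) * R ^ a := by
  rcases le_or_gt 0 a with ha | ha
  · exact (rpow_le_rpow (by linarith) hrR ha).trans
      (le_mul_of_one_le_left (rpow_nonneg hR.le a) (le_max_left _ _))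
  · calc r ^ a ≤ (R / 2) ^ a := rpow_le_rpow_of_nonpos (by linarith) hr ha.le
      _ = 2 ^ (-a) * R ^ a := by
        rw [div_rpow hR.le zero_le_two, rpow_neg zero_le_two, div_eq_inv_mul]
      _ ≤ max 1 (2 ^ (-a)) * R ^ a := by gcongr; exact le_max_right _ _

lemma sq_sub_sq_rpow_le (hp : p ≤ 0) (hr : 0 ≤ r) (hrS : r < S) :
    (S ^ 2 - r ^ 2) ^ p ≤ S ^ p * (S - r) ^ p := by
  rw [show S ^ 2 - r ^ 2 = (S + r) * (S - r) by ring, mul_rpow (by linarith) (by linarith)]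
  exact mul_le_mul_of_nonneg_right (rpow_le_rpow_of_nonpos (by linarith) (by linarith) hp)
    (rpow_nonneg (by linarith) p)

lemma rpow_mul_sub_rpow_le (hp : -1 ≤ p) (hp0 : p ≤ 0) (hr : 0 < r) (hrR : r < R)
    (hRS : R < S) :
    r ^ a * (S - r) ^ p ≤ 2 * S ^ p * r ^ a + max 1 (2 ^ (-a)) * R ^ a * (S - r) ^ p := by
  have hSp : 0 ≤ S ^ p := rpow_nonneg (by linarith) p
  have hSrp : 0 ≤ (S - r) ^ p := rpow_nonneg (by linarith) p
  have hc : 0 ≤ max 1 (2 ^ (-a)) * R ^ a :=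
    mul_nonneg (by positivity) (rpow_nonneg (by linarith) a)
  rcases le_or_gt (2 * r) S with h | h
  · have hSr : (S - r) ^ p ≤ 2 * S ^ p :=
      (rpow_le_rpow_of_nonpos (by linarith) (by linarith) hp0).trans
        (rpow_div_two_le (by linarith) hp)
    calc r ^ a * (S - r) ^ p ≤ r ^ a * (2 * S ^ p) :=
          mul_le_mul_of_nonneg_left hSr (rpow_nonneg hr.le a)
      _ = 2 * S ^ p * r ^ a := by ring
      _ ≤ _ := le_add_of_nonneg_right (mul_nonneg hc hSrp)
  · calc r ^ a * (S - r) ^ p ≤ max 1 (2 ^ (-a)) * R ^ a * (S - r) ^ p :=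
          mul_le_mul_of_nonneg_right (rpow_le_max_mul_rpow (by linarith) (by linarith) hrR.le a)
            hSrp
      _ ≤ _ := le_add_of_nonneg_left (by positivity)

lemma integral_Ioo_sub_rpow_le_of_two_mul_le (hp : -1 ≤ p) (hp0 : p ≤ 0) (hR : 0 < R)
    (h2R : 2 * R ≤ S) :
    ∫ r in Ioo 0 R, (S - r) ^ p ≤ 2 * R * S ^ p := by
  calc ∫ r in Ioo 0 R, (S - r) ^ p ≤ ∫ _ in Ioo 0 R, 2 * S ^ p :=
        setIntegral_mono_on (integrableOn_Ioo_sub_rpow p (by linarith))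
          (integrableOn_const measure_Ioo_lt_top.ne) measurableSet_Ioo fun r hr =>
          (rpow_le_rpow_of_nonpos (by linarith) (by linarith [hr.2]) hp0).trans
            (rpow_div_two_le (by linarith) hp)
    _ = 2 * R * S ^ p := by
        rw [setIntegral_const, volume_real_Ioo_of_le hR.le, smul_eq_mul]; ring

lemma integral_Ioo_sub_rpow_le (hp : -1 < p) (hp0 : p ≤ 0) (hR : 0 < R) (hRS : R < S) :
    ∫ r in Ioo 0 R, (S - r) ^ p ≤ 2 / (p + 1) * R * S ^ p := by
  have hp1 : 0 < p + 1 := by linarith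
  rcases le_or_gt (2 * R) S with h | h
  · calc ∫ r in Ioo 0 R, (S - r) ^ p ≤ 2 * R * S ^ p :=
          integral_Ioo_sub_rpow_le_of_two_mul_le hp.le hp0 hR h
      _ ≤ 2 / (p + 1) * R * S ^ p := by
          gcongr
          · exact rpow_nonneg (by linarith) p
          · rw [le_div_iff₀ hp1]; linarith
  · calc ∫ r in Ioo 0 R, (S - r) ^ p = (S ^ (p + 1) - (S - R) ^ (p + 1)) / (p + 1) := by
          rw [integral_Ioo_sub_rpow hR.le, integral_rpow (Or.inl hp)]
      _ ≤ S ^ (p + 1) / (p + 1) := by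
          gcongr; exact sub_le_self _ (rpow_nonneg (by linarith) _)
      _ = S * S ^ p / (p + 1) := by rw [rpow_add (by linarith), rpow_one, mul_comm]
      _ ≤ 2 / (p + 1) * R * S ^ p := by
          rw [div_mul_eq_mul_div, div_mul_eq_mul_div]
          gcongr
          exact rpow_nonneg (by linarith) p

lemma integral_Ioo_sub_inv_le (hR : 0 < R) (hRS : R < S) :
    ∫ r in Ioo 0 R, (S - r) ^ (-1 : ℝ) ≤
      2 * (1 + log (S / (S - R))) * R * S ^ (-1 : ℝ) := by
  have hlog : 0 ≤ log (S / (S - R)) :=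
    log_nonneg (by rw [le_div_iff₀ (by linarith)]; linarith)
  rcases le_or_gt (2 * R) S with h | h
  · calc ∫ r in Ioo 0 R, (S - r) ^ (-1 : ℝ) ≤ 2 * R * S ^ (-1 : ℝ) :=
          integral_Ioo_sub_rpow_le_of_two_mul_le le_rfl (by norm_num) hR h
      _ ≤ 2 * (1 + log (S / (S - R))) * R * S ^ (-1 : ℝ) := by
          gcongr
          · exact rpow_nonneg (by linarith) _
          · linarith
  · have h2RS : 1 < 2 * R * S⁻¹ := by
      rw [← div_eq_mul_inv, lt_div_iff₀ (by linarith)]; linarith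
    calc ∫ r in Ioo 0 R, (S - r) ^ (-1 : ℝ) = log (S / (S - R)) := by
          rw [integral_Ioo_sub_rpow hR.le]
          simp_rw [rpow_neg_one]
          refine integral_inv fun h0 => ?_
          rw [uIcc_of_le (by linarith)] at h0
          linarith [h0.1]
      _ ≤ 2 * (1 + log (S / (S - R))) * R * S ^ (-1 : ℝ) := by
          rw [rpow_neg_one]
          nlinarith [mul_le_mul_of_nonneg_left h2RS.le hlog]

lemma integral_rpow_mul_sq_sub_rpow_le_of_nonneg (ha : -1 < a) (hp : 0 ≤ p) (hR : 0 < R)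
    (hRS : R < S) :
    ∫ r in Ioo 0 R, r ^ a * (S ^ 2 - r ^ 2) ^ p ≤ 1 / (a + 1) * R ^ (a + 1) * S ^ (2 * p) := by
  have hSp : S ^ (2 * p) = (S ^ 2) ^ p := by
    simpa using rpow_natCast_mul (by linarith : 0 ≤ S) 2 p
  calc ∫ r in Ioo 0 R, r ^ a * (S ^ 2 - r ^ 2) ^ p ≤ ∫ r in Ioo 0 R, S ^ (2 * p) * r ^ a := by
        refine integral_mono_of_nonneg ?_
          (((intervalIntegral.integrableOn_Ioo_rpow_iff hR).2 ha).const_mul _) ?_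
        all_goals filter_upwards [ae_restrict_mem measurableSet_Ioo] with r ⟨hr0, hrR⟩
        · exact mul_nonneg (rpow_nonneg hr0.le a) (rpow_nonneg (by nlinarith) p)
        · rw [mul_comm, hSp]
          exact mul_le_mul_of_nonneg_right (rpow_le_rpow (by nlinarith) (by nlinarith) hp)
            (rpow_nonneg hr0.le a)
    _ = 1 / (a + 1) * R ^ (a + 1) * S ^ (2 * p) := by
        rw [integral_const_mul, integral_Ioo_rpow ha hR.le]; ring

lemma integral_rpow_mul_sq_sub_rpow_le_of_nonpos (ha : -1 < a) (hp : -1 ≤ p) (hp0 : p ≤ 0)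
    (hR : 0 < R) (hRS : R < S) :
    ∫ r in Ioo 0 R, r ^ a * (S ^ 2 - r ^ 2) ^ p ≤
      S ^ p * (2 * S ^ p * (R ^ (a + 1) / (a + 1)) +
        max 1 (2 ^ (-a)) * R ^ a * ∫ r in Ioo 0 R, (S - r) ^ p) := by
  have hint := (intervalIntegral.integrableOn_Ioo_rpow_iff hR).2 ha
  have hint' := integrableOn_Ioo_sub_rpow p hRS
  calc ∫ r in Ioo 0 R, r ^ a * (S ^ 2 - r ^ 2) ^ p
      ≤ ∫ r in Ioo 0 R,
          S ^ p * (2 * S ^ p * r ^ a + max 1 (2 ^ (-a)) * R ^ a * (S - r) ^ p) := by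
        refine integral_mono_of_nonneg ?_
          (((hint.const_mul _).add (hint'.const_mul _)).const_mul _) ?_
        all_goals filter_upwards [ae_restrict_mem measurableSet_Ioo] with r ⟨hr0, hrR⟩
        · exact mul_nonneg (rpow_nonneg hr0.le a) (rpow_nonneg (by nlinarith) p)
        · calc r ^ a * (S ^ 2 - r ^ 2) ^ p ≤ r ^ a * (S ^ p * (S - r) ^ p) :=
                mul_le_mul_of_nonneg_left (sq_sub_sq_rpow_le hp0 hr0.le (hrR.trans hRS))
                  (rpow_nonneg hr0.le a)
            _ = S ^ p * (r ^ a * (S - r) ^ p) := by ring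
            _ ≤ _ := mul_le_mul_of_nonneg_left (rpow_mul_sub_rpow_le hp hp0 hr0 hrR hRS)
                  (rpow_nonneg (by linarith) p)
    _ = _ := by
        rw [integral_const_mul, integral_add (hint.const_mul _) (hint'.const_mul _),
          integral_const_mul, integral_const_mul, integral_Ioo_rpow ha hR.le]

lemma integral_rpow_mul_sq_sub_rpow_le (ha : -1 < a) (hp : -1 < p) (hR : 0 < R) (hRS : R < S) :
    ∫ r in Ioo 0 R, r ^ a * (S ^ 2 - r ^ 2) ^ p ≤
      (2 / (a + 1) + max 1 (2 ^ (-a)) * (2 / (p + 1))) * R ^ (a + 1) * S ^ (2 * p) := by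
  have ha1 : 0 < a + 1 := by linarith
  have hp1 : 0 < p + 1 := by linarith
  rcases le_or_gt 0 p with hp0 | hp0
  · refine (integral_rpow_mul_sq_sub_rpow_le_of_nonneg ha hp0 hR hRS).trans ?_
    gcongr
    · exact rpow_nonneg (by linarith) _
    · exact le_add_of_le_of_nonneg (by gcongr; norm_num) (by positivity)
  · have hRa : R ^ a * R = R ^ (a + 1) := by rw [rpow_add hR, rpow_one]
    have hSp : S ^ p * S ^ p = S ^ (2 * p) := by rw [← rpow_add (by linarith)]; ring_nf
    calc ∫ r in Ioo 0 R, r ^ a * (S ^ 2 - r ^ 2) ^ p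
        ≤ S ^ p * (2 * S ^ p * (R ^ (a + 1) / (a + 1)) +
            max 1 (2 ^ (-a)) * R ^ a * (2 / (p + 1) * R * S ^ p)) := by
          refine (integral_rpow_mul_sq_sub_rpow_le_of_nonpos ha hp.le hp0.le hR hRS).trans ?_
          gcongr
          · exact rpow_nonneg (by linarith) _
          · exact integral_Ioo_sub_rpow_le hp hp0.le hR hRS
      _ = _ := by rw [← hRa, ← hSp]; ring

lemma integral_rpow_mul_sq_sub_inv_le (ha : -1 < a) (hR : 0 < R) (hRS : R < S) :
    ∫ r in Ioo 0 R, r ^ a * (S ^ 2 - r ^ 2) ^ (-1 : ℝ) ≤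
      (2 / (a + 1) + max 1 (2 ^ (-a)) * 2) * (1 + log (S / (S - R))) * R ^ (a + 1) *
        S ^ (2 * (-1) : ℝ) := by
  have hlog : 0 ≤ log (S / (S - R)) :=
    log_nonneg (by rw [le_div_iff₀ (by linarith)]; linarith)
  have ha1 : 0 < a + 1 := by linarith
  have hRa : R ^ a * R = R ^ (a + 1) := by rw [rpow_add hR, rpow_one]
  have hSp : S ^ (-1 : ℝ) * S ^ (-1 : ℝ) = S ^ (2 * (-1) : ℝ) := by
    rw [← rpow_add (by linarith)]; norm_num
  calc ∫ r in Ioo 0 R, r ^ a * (S ^ 2 - r ^ 2) ^ (-1 : ℝ)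
      ≤ S ^ (-1 : ℝ) * (2 * S ^ (-1 : ℝ) * (R ^ (a + 1) / (a + 1)) +
          max 1 (2 ^ (-a)) * R ^ a * (2 * (1 + log (S / (S - R))) * R * S ^ (-1 : ℝ))) := by
        refine (integral_rpow_mul_sq_sub_rpow_le_of_nonpos ha le_rfl (by norm_num) hR hRS).trans ?_
        gcongr
        · exact rpow_nonneg (by linarith) _
        · exact integral_Ioo_sub_inv_le hR hRS
    _ = (2 / (a + 1) + max 1 (2 ^ (-a)) * 2 * (1 + log (S / (S - R)))) * R ^ (a + 1) *
          S ^ (2 * (-1) : ℝ) := by rw [← hRa, ← hSp]; ring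
    _ ≤ _ := by
        gcongr
        · exact rpow_nonneg (by linarith) _
        · have := div_pos two_pos ha1
          nlinarith

theorem exists_integral_rpow_mul_sq_sub_rpow_le (ha : -1 < a) (hp : -1 ≤ p) :
    ∃ C > 0, ∀ R S : ℝ, 0 < R → R < S →
      ∫ r in Ioo 0 R, r ^ a * (S ^ 2 - r ^ 2) ^ p ≤
        C * (1 + if p = -1 then log (S / (S - R)) else 0) * R ^ (a + 1) * S ^ (2 * p) := by
  have ha1 : 0 < a + 1 := by linarith
  rcases hp.eq_or_lt with rfl | hp
  · refine ⟨2 / (a + 1) + max 1 (2 ^ (-a)) * 2, by positivity, fun R S hR hRS => ?_⟩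
    rw [if_pos rfl]
    exact integral_rpow_mul_sq_sub_inv_le ha hR hRS
  · have hp1 : 0 < p + 1 := by linarith
    refine ⟨2 / (a + 1) + max 1 (2 ^ (-a)) * (2 / (p + 1)), by positivity,
      fun R S hR hRS => ?_⟩
    rw [if_neg hp.ne', add_zero, mul_one]
    exact integral_rpow_mul_sq_sub_rpow_le ha hp hR hRS

end PowerIntegrals

lemma norm_setIntegral_ofReal_rpow_mul_cpow_le {R S : ℝ} (hRS : R ≤ S) (a : ℝ) (w : ℂ) :
    ‖∫ r in Ioo 0 R, ((r ^ a : ℝ) : ℂ) * ((S ^ 2 - r ^ 2 : ℝ) : ℂ) ^ w‖ ≤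
      ∫ r in Ioo 0 R, r ^ a * (S ^ 2 - r ^ 2) ^ w.re := by
  refine (norm_integral_le_integral_norm _).trans_eq
    (setIntegral_congr_fun measurableSet_Ioo fun r ⟨hr0, hrR⟩ => ?_)
  rw [norm_mul, Complex.norm_real, norm_of_nonneg (rpow_nonneg hr0.le a),
    Complex.norm_cpow_eq_rpow_re_of_pos (by nlinarith)]

lemma exp_sub_exp_rpow_mul_exp_add_exp_rpow {b t : ℝ} (hbt : b ≤ t) (x y : ℝ) :
    (exp t - exp b) ^ x * (exp b + exp t) ^ y * exp (-(x + y) * (b + t)) =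
      (exp (-b) - exp (-t)) ^ x * (exp (-t) + exp (-b)) ^ y := by
  have hsub : exp t - exp b = exp (b + t) * (exp (-b) - exp (-t)) := by
    rw [mul_sub, ← exp_add, ← exp_add]; ring_nf
  have hadd : exp b + exp t = exp (b + t) * (exp (-t) + exp (-b)) := by
    rw [mul_add, ← exp_add, ← exp_add]; ring_nf
  have hnonneg : 0 ≤ exp (-b) - exp (-t) := sub_nonneg.2 (exp_le_exp.2 (by linarith))
  rw [hsub, hadd, mul_rpow (exp_pos _).le hnonneg, mul_rpow (exp_pos _).le (by positivity),
    ← exp_mul, ← exp_mul]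
  calc exp ((b + t) * x) * (exp (-b) - exp (-t)) ^ x *
        (exp ((b + t) * y) * (exp (-t) + exp (-b)) ^ y) * exp (-(x + y) * (b + t))
      = exp ((b + t) * x + (b + t) * y + -(x + y) * (b + t)) *
          ((exp (-b) - exp (-t)) ^ x * (exp (-t) + exp (-b)) ^ y) := by
        rw [exp_add, exp_add]; ring
    _ = _ := by ring_nf; rw [exp_zero, one_mul]

lemma log_div_sub_le_sub {b t : ℝ} (hbt : b ≤ t) :
    log ((exp (-t) + exp (-b)) / ((exp (-t) + exp (-b)) - (exp (-b) - exp (-t)))) ≤ t - b := by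
  have hden : (exp (-t) + exp (-b)) - (exp (-b) - exp (-t)) = 2 * exp (-t) := by ring
  rw [hden, ← log_exp (t - b)]
  refine log_le_log (by positivity) ?_
  rw [div_le_iff₀ (by positivity), mul_left_comm, ← exp_add, sub_add_eq_add_sub, add_neg_cancel,
    zero_sub]
  linarith [exp_le_exp.2 (neg_le_neg hbt)]

theorem stmt10_general (a : ℝ) (ha : a > -1) (M : ℂ) (hM : 1/2 ≤ M.re) :
    ∃ C > 0, ∀ b t : ℝ, 0 < b → b < t →
      ‖
        (∫ r in Set.Ioo (0:ℝ) (Real.exp (-b) - Real.exp (-t)),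
          ((r ^ a : ℝ) : ℂ) *
            (((Real.exp (-t) + Real.exp (-b)) ^ 2 - r ^ 2 : ℝ) : ℂ) ^ (-(3/2 : ℂ) + M))‖
        ≤ C * (1 + (t - b) ^ (if M.re = 1/2 then (1:ℝ) else 0)) *
            (Real.exp t - Real.exp b) ^ (a + 1) *
            (Real.exp b + Real.exp t) ^ (2 * M.re - 3) *
            Real.exp (-(a + 2 * M.re - 2) * (b + t)) := by
  obtain ⟨C, hC, hbound⟩ :=
    exists_integral_rpow_mul_sq_sub_rpow_le (p := M.re - 3 / 2) ha (by linarith)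
  refine ⟨C, hC, fun b t _ hbt => ?_⟩
  have hR : 0 < exp (-b) - exp (-t) := sub_pos.2 (exp_lt_exp.2 (by linarith))
  have hRS : exp (-b) - exp (-t) < exp (-t) + exp (-b) := by linarith [exp_pos (-t)]
  have hnorm := norm_setIntegral_ofReal_rpow_mul_cpow_le hRS.le a (-(3 / 2) + M)
  rw [show (-(3 / 2) + M).re = M.re - 3 / 2 by norm_num [sub_eq_neg_add]] at hnorm
  have hlog : (1 + if M.re - 3 / 2 = -1 then
        log ((exp (-t) + exp (-b)) / ((exp (-t) + exp (-b)) - (exp (-b) - exp (-t)))) else 0) ≤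
      1 + (t - b) ^ (if M.re = 1/2 then (1:ℝ) else 0) := by
    split_ifs with h1 h2 h2
    · rw [rpow_one]; linarith [log_div_sub_le_sub hbt.le]
    · exact absurd (by linarith) h2
    · exact absurd (by linarith) h1
    · simp
  have hexp := exp_sub_exp_rpow_mul_exp_add_exp_rpow hbt.le (a + 1) (2 * M.re - 3)
  rw [show -(a + 1 + (2 * M.re - 3)) = -(a + 2 * M.re - 2) by ring] at hexp
  calc _ ≤ _ := hnorm.trans (hbound _ _ hR hRS)
    _ ≤ C * (1 + (t - b) ^ (if M.re = 1/2 then (1:ℝ) else 0)) *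
          ((exp (-b) - exp (-t)) ^ (a + 1) * (exp (-t) + exp (-b)) ^ (2 * M.re - 3)) := by
        rw [show 2 * (M.re - 3 / 2) = 2 * M.re - 3 by ring, ← mul_assoc]
        gcongr
    _ = _ := by rw [← hexp]; ring

theorem stmt10 (a : ℝ) (ha : a > -1) (M : ℂ) (hM : 1/2 ≤ M.re) (hM' : M ≠ 1/2) :
    ∃ C > 0, ∀ b t : ℝ, 0 < b → b < t →
      ‖
        (∫ r in Set.Ioo (0:ℝ) (Real.exp (-b) - Real.exp (-t)),
          ((r ^ a : ℝ) : ℂ) *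
            (((Real.exp (-t) + Real.exp (-b)) ^ 2 - r ^ 2 : ℝ) : ℂ) ^ (-(3/2 : ℂ) + M))‖
        ≤ C * (1 + (t - b) ^ (if M.re = 1/2 then (1:ℝ) else 0)) *
            (Real.exp t - Real.exp b) ^ (a + 1) *
            (Real.exp b + Real.exp t) ^ (2 * M.re - 3) *
            Real.exp (-(a + 2 * M.re - 2) * (b + t)) :=
  stmt10_general a ha M hM
end

section
/- Let M ∈ ℂ with Re M > 0 and Re M ≠ 1/2, and let a > −1 be real. Then there exists a constant C > 0, depending only on M and a, such that for all real z > 1: ∫₀^{z−1} y^a ((z+1)² − y²)^{−1/2 + Re M} · | F(1/2 − M, 1/2 − M; 1; ((z−1)² − y²)/((z+1)² − y²)) | dy ≤ C (z−1)^{1+a} z^{Re M − 1/2} if 0 < Re M < 1/2, and ≤ C (z−1)^{1+a} (z+1)^{2 Re M − 1} if Re M > 1/2. -/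
open MeasureTheory

/-- The Gauss hypergeometric function `F(a,b;c;x)` as a sum of the hypergeometric series. -/
noncomputable def GaussF (a b c x : ℂ) : ℂ :=
  ∑' n : ℕ, (ascPochhammer ℂ n).eval a * (ascPochhammer ℂ n).eval b /
    ((ascPochhammer ℂ n).eval c * (n.factorial : ℂ)) * x ^ n

/-!
With `q = 1/2 - M`, so `Re q < 1/2`, the coefficients `cₙ = |(q)ₙ|² / n!²` of `F(q, q; 1; ·)`
satisfy Raabe's condition `cₙ₊₁ (n+1)^s ≤ cₙ n^s` for `s = 1 + Re M > 1` and all large `n`;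
hence `∑ cₙ < ∞` and `F(q, q; 1; x)` is bounded by a constant `K` for `|x| ≤ 1`.
For `0 < y < z - 1` the base `(z+1)² - y²` lies in `[z, (z+1)²]`, which bounds its power by
`z^(Re M - 1/2)` or `(z+1)^(2 Re M - 1)` according to the sign of the exponent, and what is
left is `K ∫₀^{z-1} y^a dy = K (z-1)^(1+a) / (1+a)`.
-/

open Filter Set

theorem summable_of_eventually_mul_rpow_le {c : ℕ → ℝ} {s : ℝ} (hs : 1 < s)
    (hc : ∀ n, 0 ≤ c n)
    (h : ∀ᶠ n : ℕ in atTop, c (n + 1) * ((n : ℝ) + 1) ^ s ≤ c n * (n : ℝ) ^ s) :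
    Summable c := by
  obtain ⟨N, hN⟩ := eventually_atTop.1 h
  have hmono : ∀ n ≥ N, c n * (n : ℝ) ^ s ≤ c N * (N : ℝ) ^ s := by
    intro n hn
    induction n, hn using Nat.le_induction with
    | base => exact le_rfl
    | succ n hn ih => exact_mod_cast (hN n hn).trans ih
  refine Summable.of_norm_bounded_eventually_nat
    ((Real.summable_nat_rpow_inv.2 hs).mul_left (c N * (N : ℝ) ^ s)) ?_
  filter_upwards [eventually_ge_atTop (max N 1)] with n hn
  have hpos : 0 < (n : ℝ) ^ s := by
    have : (1 : ℝ) ≤ n := by exact_mod_cast le_of_max_le_right hn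
    positivity
  rw [Real.norm_of_nonneg (hc n), ← div_eq_mul_inv, le_div_iff₀ hpos]
  exact hmono n (le_of_max_le_left hn)

theorem one_sub_div_le_div_rpow {s t : ℝ} (hs : 1 ≤ s) (ht : 0 ≤ t) :
    1 - s / (t + 1) ≤ (t / (t + 1)) ^ s := by
  have h := one_add_mul_self_le_rpow_one_add
    (show (-1 : ℝ) ≤ -(1 / (t + 1)) by
      rw [neg_le_neg_iff, div_le_one (by linarith)]; linarith) hs
  have heq : 1 + -(1 / (t + 1)) = t / (t + 1) := by field_simp; ring
  rw [heq] at h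
  linarith [show s * -(1 / (t + 1)) = -(s / (t + 1)) by ring]

-- `‖q + n‖² = (n+1)² - 2 (1 - Re q) n + O(1)`, and `3/2 - Re q < 2 (1 - Re q)`.
theorem eventually_norm_add_natCast_sq_le {q : ℂ} (hq : q.re < 1 / 2) :
    ∀ᶠ n : ℕ in atTop, ‖q + n‖ ^ 2 ≤ ((n : ℝ) + 1) ^ 2 - (3 / 2 - q.re) * ((n : ℝ) + 1) := by
  have hd : 0 < 1 / 2 - q.re := by linarith
  filter_upwards [tendsto_natCast_atTop_atTop.eventually_ge_atTop
    (1 + (q.re ^ 2 + q.im ^ 2) / (1 / 2 - q.re))] with n hn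
  have hn' : (1 / 2 - q.re) + (q.re ^ 2 + q.im ^ 2) ≤ (1 / 2 - q.re) * n := by
    rwa [← div_le_iff₀' hd, add_div, div_self hd.ne']
  rw [Complex.sq_norm, Complex.normSq_apply]
  simp only [Complex.add_re, Complex.natCast_re, Complex.add_im, Complex.natCast_im, add_zero]
  nlinarith

theorem eventually_norm_add_natCast_sq_mul_rpow_le {q : ℂ} (hq : q.re < 1 / 2) :
    ∀ᶠ n : ℕ in atTop, ‖q + n‖ ^ 2 * ((n : ℝ) + 1) ^ (3 / 2 - q.re) ≤
      (n : ℝ) ^ (3 / 2 - q.re) * ((n : ℝ) + 1) ^ 2 := by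
  filter_upwards [eventually_norm_add_natCast_sq_le hq] with n hn
  have hs : 1 ≤ 3 / 2 - q.re := by linarith
  set s := 3 / 2 - q.re
  have hn1 : (0 : ℝ) < n + 1 := by positivity
  have hps : 0 < ((n : ℝ) + 1) ^ s := Real.rpow_pos_of_pos hn1 s
  have hbound : ‖q + n‖ ^ 2 ≤ ((n : ℝ) + 1) ^ 2 * ((n : ℝ) ^ s / ((n : ℝ) + 1) ^ s) := by
    calc ‖q + n‖ ^ 2 ≤ ((n : ℝ) + 1) ^ 2 * (1 - s / ((n : ℝ) + 1)) := by
          convert hn using 1; field_simp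
      _ ≤ ((n : ℝ) + 1) ^ 2 * ((n : ℝ) / ((n : ℝ) + 1)) ^ s := by
          gcongr; exact one_sub_div_le_div_rpow hs n.cast_nonneg
      _ = _ := by rw [Real.div_rpow n.cast_nonneg hn1.le]
  calc ‖q + n‖ ^ 2 * ((n : ℝ) + 1) ^ s
      ≤ ((n : ℝ) + 1) ^ 2 * ((n : ℝ) ^ s / ((n : ℝ) + 1) ^ s) * ((n : ℝ) + 1) ^ s := by gcongr
    _ = (n : ℝ) ^ s * ((n : ℝ) + 1) ^ 2 := by field_simp

theorem summable_norm_ascPochhammer_eval_sq_div {q : ℂ} (hq : q.re < 1 / 2) :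
    Summable fun n : ℕ => ‖(ascPochhammer ℂ n).eval q‖ ^ 2 / (n.factorial : ℝ) ^ 2 := by
  refine summable_of_eventually_mul_rpow_le (s := 3 / 2 - q.re) (by linarith)
    (fun n => by positivity) ?_
  filter_upwards [eventually_norm_add_natCast_sq_mul_rpow_le hq] with n hn
  have hfac : (0 : ℝ) < n.factorial := by exact_mod_cast n.factorial_pos
  rw [ascPochhammer_succ_eval, Nat.factorial_succ, norm_mul, Nat.cast_mul, Nat.cast_succ]
  calc _ = ‖(ascPochhammer ℂ n).eval q‖ ^ 2 / (n.factorial : ℝ) ^ 2 *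
        (‖q + n‖ ^ 2 * ((n : ℝ) + 1) ^ (3 / 2 - q.re)) / ((n : ℝ) + 1) ^ 2 := by
        field_simp
    _ ≤ ‖(ascPochhammer ℂ n).eval q‖ ^ 2 / (n.factorial : ℝ) ^ 2 *
        ((n : ℝ) ^ (3 / 2 - q.re) * ((n : ℝ) + 1) ^ 2) / ((n : ℝ) + 1) ^ 2 := by gcongr
    _ = _ := by field_simp

theorem exists_pos_bound_norm_gaussF {q : ℂ} (hq : q.re < 1 / 2) :
    ∃ K > 0, ∀ x : ℂ, ‖x‖ ≤ 1 → ‖GaussF q q 1 x‖ ≤ K := by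
  set c : ℕ → ℝ := fun n => ‖(ascPochhammer ℂ n).eval q‖ ^ 2 / (n.factorial : ℝ) ^ 2
  have hc : Summable c := summable_norm_ascPochhammer_eval_sq_div hq
  refine ⟨∑' n, c n, ?_, fun x hx => ?_⟩
  · calc (0 : ℝ) < c 0 := by simp [c]
      _ ≤ ∑' n, c n := hc.le_tsum 0 fun n _ => by positivity
  have hterm : ∀ n : ℕ, ‖(ascPochhammer ℂ n).eval q * (ascPochhammer ℂ n).eval q /
      ((ascPochhammer ℂ n).eval 1 * (n.factorial : ℂ)) * x ^ n‖ ≤ c n := by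
    intro n
    have hfac : (0 : ℝ) < n.factorial := by exact_mod_cast n.factorial_pos
    rw [ascPochhammer_eval_one, norm_mul, norm_div, norm_mul, norm_mul, norm_pow,
      Complex.norm_natCast]
    calc _ = c n * ‖x‖ ^ n := by simp only [c]; field_simp
      _ ≤ c n * 1 := by gcongr; exact pow_le_one₀ (norm_nonneg x) hx
      _ = c n := mul_one _
  have hsum := hc.of_nonneg_of_le (fun n => norm_nonneg _) hterm
  exact (norm_tsum_le_tsum_norm hsum).trans (hsum.tsum_le_tsum hterm hc)

theorem setIntegral_Ioo_le_of_le_mul_rpow {a b B : ℝ} (ha : -1 < a) (hb : 0 ≤ b) {f : ℝ → ℝ}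
    (hf : ∀ y ∈ Ioo 0 b, 0 ≤ f y ∧ f y ≤ B * y ^ a) :
    ∫ y in Ioo 0 b, f y ≤ B * (b ^ (1 + a) / (1 + a)) := by
  have hint : IntegrableOn (fun y : ℝ => y ^ a) (Ioo 0 b) :=
    (intervalIntegral.intervalIntegrable_rpow' ha).1.mono_set Ioo_subset_Ioc_self
  have hval : ∫ y in Ioo 0 b, y ^ a = b ^ (1 + a) / (1 + a) := by
    rw [← integral_Ioc_eq_integral_Ioo, ← intervalIntegral.integral_of_le hb,
      integral_rpow (Or.inl ha), Real.zero_rpow (by linarith), add_comm a]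
    ring
  calc ∫ y in Ioo 0 b, f y ≤ ∫ y in Ioo 0 b, B * y ^ a :=
        integral_mono_of_nonneg
          (ae_restrict_of_forall_mem measurableSet_Ioo fun y hy => (hf y hy).1)
          (hint.const_mul B) (ae_restrict_of_forall_mem measurableSet_Ioo fun y hy => (hf y hy).2)
    _ = B * (b ^ (1 + a) / (1 + a)) := by rw [integral_const_mul, hval]

section
variable {y z : ℝ}

theorem le_sq_sub_sq_of_mem_Ioo (hy : y ∈ Ioo 0 (z - 1)) : z ≤ (z + 1) ^ 2 - y ^ 2 := by
  nlinarith [hy.1, hy.2]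

theorem norm_div_sq_sub_sq_le_one (hy : y ∈ Ioo 0 (z - 1)) :
    ‖((((z - 1) ^ 2 - y ^ 2) / ((z + 1) ^ 2 - y ^ 2) : ℝ) : ℂ)‖ ≤ 1 := by
  have hden : 0 < (z + 1) ^ 2 - y ^ 2 := by nlinarith [hy.1, hy.2]
  rw [Complex.norm_real, Real.norm_eq_abs, abs_le, div_le_one hden, le_div_iff₀ hden]
  constructor <;> nlinarith [hy.1, hy.2]

end

theorem integral_rpow_mul_norm_gaussF_le {q : ℂ} {a K e z w : ℝ} (ha : -1 < a) (hz : 1 < z)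
    (hK : ∀ x : ℂ, ‖x‖ ≤ 1 → ‖GaussF q q 1 x‖ ≤ K)
    (hw : ∀ y ∈ Ioo 0 (z - 1), ((z + 1) ^ 2 - y ^ 2) ^ e ≤ w) :
    (∫ y in Ioo (0 : ℝ) (z - 1), y ^ a * ((z + 1) ^ 2 - y ^ 2) ^ e *
        ‖GaussF q q 1 ((((z - 1) ^ 2 - y ^ 2) / ((z + 1) ^ 2 - y ^ 2) : ℝ) : ℂ)‖)
      ≤ K / (1 + a) * (z - 1) ^ (1 + a) * w := by
  have hbound := setIntegral_Ioo_le_of_le_mul_rpow (B := K * w) ha (by linarith : (0 : ℝ) ≤ z - 1)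
    (f := fun y => y ^ a * ((z + 1) ^ 2 - y ^ 2) ^ e *
        ‖GaussF q q 1 ((((z - 1) ^ 2 - y ^ 2) / ((z + 1) ^ 2 - y ^ 2) : ℝ) : ℂ)‖)
    fun y hy => by
      have hP : 0 < (z + 1) ^ 2 - y ^ 2 := by linarith [le_sq_sub_sq_of_mem_Ioo hy]
      have hya : 0 ≤ y ^ a := Real.rpow_nonneg hy.1.le a
      refine ⟨by positivity, ?_⟩
      have hw0 : 0 ≤ w := (Real.rpow_nonneg hP.le e).trans (hw y hy)
      calc _ ≤ y ^ a * w * K :=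
            mul_le_mul (mul_le_mul_of_nonneg_left (hw y hy) hya)
              (hK _ (norm_div_sq_sub_sq_le_one hy)) (norm_nonneg _) (by positivity)
        _ = K * w * y ^ a := by ring
  calc _ ≤ K * w * ((z - 1) ^ (1 + a) / (1 + a)) := hbound
    _ = K / (1 + a) * (z - 1) ^ (1 + a) * w := by ring

theorem stmt12_general (M : ℂ) (hM : 0 < M.re) (a : ℝ) (ha : a > -1) :
    ∃ C > 0, ∀ z : ℝ, 1 < z →
      (0 < M.re → M.re < 1/2 →
        (∫ y in Set.Ioo (0:ℝ) (z - 1),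
            y ^ a * ((z + 1) ^ 2 - y ^ 2) ^ (-(1/2) + M.re) *
              ‖(GaussF (1/2 - M) (1/2 - M) 1
                  ((((z - 1) ^ 2 - y ^ 2) / ((z + 1) ^ 2 - y ^ 2) : ℝ) : ℂ))‖)
          ≤ C * (z - 1) ^ (1 + a) * z ^ (M.re - 1/2)) ∧
      (1/2 < M.re →
        (∫ y in Set.Ioo (0:ℝ) (z - 1),
            y ^ a * ((z + 1) ^ 2 - y ^ 2) ^ (-(1/2) + M.re) *
              ‖(GaussF (1/2 - M) (1/2 - M) 1
                  ((((z - 1) ^ 2 - y ^ 2) / ((z + 1) ^ 2 - y ^ 2) : ℝ) : ℂ))‖)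
          ≤ C * (z - 1) ^ (1 + a) * (z + 1) ^ (2 * M.re - 1)) := by
  obtain ⟨K, hK0, hK⟩ := exists_pos_bound_norm_gaussF (q := 1 / 2 - M) (by simp; linarith)
  have ha' : 0 < 1 + a := by linarith
  refine ⟨K / (1 + a), by positivity, fun z hz => ⟨fun _ hlt => ?_, fun hgt => ?_⟩⟩
  · refine integral_rpow_mul_norm_gaussF_le ha hz hK fun y hy => ?_
    rw [neg_add_eq_sub]
    exact Real.rpow_le_rpow_of_nonpos (by linarith) (le_sq_sub_sq_of_mem_Ioo hy) (by linarith)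
  · refine integral_rpow_mul_norm_gaussF_le ha hz hK fun y hy => ?_
    calc _ ≤ ((z + 1) ^ 2) ^ (-(1 / 2) + M.re) :=
          Real.rpow_le_rpow (by linarith [le_sq_sub_sq_of_mem_Ioo hy])
            (by nlinarith) (by linarith)
      _ = (z + 1) ^ (2 * M.re - 1) := by
          rw [← Real.rpow_natCast_mul (by linarith)]
          ring_nf

theorem stmt12 (M : ℂ) (hM : 0 < M.re) (hM' : M.re ≠ 1/2) (a : ℝ) (ha : a > -1) :
    ∃ C > 0, ∀ z : ℝ, 1 < z →
      (0 < M.re → M.re < 1/2 →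
        (∫ y in Set.Ioo (0:ℝ) (z - 1),
            y ^ a * ((z + 1) ^ 2 - y ^ 2) ^ (-(1/2) + M.re) *
              ‖(GaussF (1/2 - M) (1/2 - M) 1
                  ((((z - 1) ^ 2 - y ^ 2) / ((z + 1) ^ 2 - y ^ 2) : ℝ) : ℂ))‖)
          ≤ C * (z - 1) ^ (1 + a) * z ^ (M.re - 1/2)) ∧
      (1/2 < M.re →
        (∫ y in Set.Ioo (0:ℝ) (z - 1),
            y ^ a * ((z + 1) ^ 2 - y ^ 2) ^ (-(1/2) + M.re) *
              ‖(GaussF (1/2 - M) (1/2 - M) 1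
                  ((((z - 1) ^ 2 - y ^ 2) / ((z + 1) ^ 2 - y ^ 2) : ℝ) : ℂ))‖)
          ≤ C * (z - 1) ^ (1 + a) * (z + 1) ^ (2 * M.re - 1)) :=
  stmt12_general M hM a ha
end
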